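/- Let G ≤ Homeo+(S^1) and L a G-invariant lamination system containing a non-leaf ideal polygon P such that the G-orbit of the vertex set of P, v_G(P) = ∪_{g∈G} v(g(P)), is dense in S^1. Then G contains a nontrivial element with nonempty fixed-point set. -/

import Mathlib

/-!
By density of `v_G(P)`, every complementary interval `I` of the ideal polygon `P` contains a
vertex `g x` of a translate `g(P)`. Since the leaves of `g(P)` and `P` are unlinked, some
`g(K)`, `K ∈ P`, then lies strictly inside `I`. As `P` has only finitely many complementary
intervals, chaining these inclusions around a cycle gives `h ∈ G` and `K ∈ P` with `h(K) ⊊ K`.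
Then `h ≠ 1`, and `h` maps the closed arc `closure K` into itself, so it has a fixed point.
-/

open Set Topology

noncomputable section

/-- Stereographic projection from `1 ∈ S¹`. -/
def sproj (z : Circle) : ℝ := (z : ℂ).im / ((z : ℂ).re - 1)

/-- `(a,b,c)` is a positively oriented triple on `S¹`. -/
def posOri (a b c : Circle) : Prop :=
  a ≠ b ∧ b ≠ c ∧ c ≠ a ∧ sproj (a⁻¹ * b) < sproj (a⁻¹ * c)

/-- The nondegenerate open interval `(u,v)` on `S¹`. -/
def oInt (u v : Circle) : Set Circle := {p | posOri u p v}

/-- `I` is a nondegenerate open interval on `S¹`. -/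
def IsND (I : Set Circle) : Prop := ∃ u v : Circle, u ≠ v ∧ I = oInt u v

/-- The dual interval `I* = (v,u)` of `I = (u,v)`, i.e. the interior of the complement. -/
def dual (I : Set Circle) : Set Circle := interior Iᶜ

/-- The leaf `{I, I*}` lies on `J`. -/
def LiesOn (I J : Set Circle) : Prop := I ⊆ J ∨ dual I ⊆ J

/-- A lamination system on `S¹`. -/
structure LamSys (L : Set (Set Circle)) : Prop where
  nonempty : L.Nonempty
  nd : ∀ I ∈ L, IsND I
  dualMem : ∀ I ∈ L, dual I ∈ L
  unlinked : ∀ I ∈ L, ∀ J ∈ L, LiesOn I J ∨ LiesOn I (dual J)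
  chainUnion : ∀ f : ℕ → Set Circle, (∀ n, f n ∈ L) → (∀ n, f n ⊆ f (n + 1)) →
    IsND (⋃ n, f n) → (⋃ n, f n) ∈ L

/-- The leaf associated to an interval. -/
def leafOf (I : Set Circle) : Set (Set Circle) := {I, dual I}

/-- `liminf` of a sequence of sets. -/
def sLiminf (f : ℕ → Set Circle) : Set Circle := ⋃ k, ⋂ n, ⋂ (_ : k ≤ n), f n

/-- `limsup` of a sequence of sets. -/
def sLimsup (f : ℕ → Set Circle) : Set Circle := ⋂ k, ⋃ n, ⋃ (_ : k ≤ n), f n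

/-- The sequence of intervals converges to `J`. -/
def ConvTo (f : ℕ → Set Circle) (J : Set Circle) : Prop :=
  J ⊆ sLiminf f ∧ sLiminf f ⊆ sLimsup f ∧ sLimsup f ⊆ closure J

/-- A gap of a lamination system. -/
def IsGap (L G : Set (Set Circle)) : Prop :=
  G ⊆ L ∧ (∀ I ∈ G, ∀ J ∈ G, I ≠ J → I ∩ J = ∅) ∧ ∀ I ∈ L, ∃ J ∈ G, LiesOn I J

/-- A gap which is a leaf. -/
def IsLeafGap (G : Set (Set Circle)) : Prop := ∃ I, G = leafOf I

/-- The vertex (endpoint) set of a gap. -/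
def vset (G : Set (Set Circle)) : Set Circle := (⋃₀ G)ᶜ

/-- A very full lamination system: every gap is an ideal polygon (finite vertex set). -/
def VeryFull (L : Set (Set Circle)) : Prop := ∀ G, IsGap L G → (vset G).Finite

/-- The set of endpoints of leaves of `L`. -/
def ELset (L : Set (Set Circle)) : Set Circle := ⋃ I ∈ L, frontier I

/-- A rainbow at `p`. -/
def Rainbow (L : Set (Set Circle)) (p : Circle) (f : ℕ → Set Circle) : Prop :=
  (∀ n, f n ∈ L) ∧ (∀ n, f (n + 1) ⊆ f n) ∧ (⋂ n, f n) = {p}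

/-- An `I`-side sequence of leaves. -/
def SideSeq (L : Set (Set Circle)) (I : Set Circle) (f : ℕ → Set Circle) : Prop :=
  (∀ n, f n ∈ L) ∧ (∀ n, I ∉ leafOf (f n)) ∧ (∀ n, LiesOn (f n) I) ∧ ConvTo f I

/-- `I` is isolated in `L`. -/
def IsolatedInt (L : Set (Set Circle)) (I : Set Circle) : Prop := ∀ f, ¬ SideSeq L I f

/-- `C_p^I`. -/
def Cset (L : Set (Set Circle)) (p : Circle) (I : Set Circle) : Set (Set Circle) :=
  {J ∈ L | p ∈ J ∧ J ⊆ I}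

/-- The group of self-homeomorphisms of the circle (composition as multiplication). -/
instance : Group (Circle ≃ₜ Circle) where
  mul g h := h.trans g
  one := Homeomorph.refl _
  inv := Homeomorph.symm
  mul_assoc _ _ _ := Homeomorph.ext fun _ => rfl
  one_mul _ := Homeomorph.ext fun _ => rfl
  mul_one _ := Homeomorph.ext fun _ => rfl
  inv_mul_cancel g := Homeomorph.ext fun x => g.symm_apply_apply x

/-- An orientation-preserving homeomorphism of the circle. -/
def OrientPres (g : Circle ≃ₜ Circle) : Prop :=
  ∀ a b c, posOri a b c → posOri (g a) (g b) (g c)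

/-- `L` is invariant under a subgroup `G` of homeomorphisms. -/
def GInv (G : Subgroup (Circle ≃ₜ Circle)) (L : Set (Set Circle)) : Prop :=
  ∀ g ∈ G, ∀ I ∈ L, (⇑g) '' I ∈ L

/-- The image of a gap under a homeomorphism. -/
def gapIm (g : Circle ≃ₜ Circle) (P : Set (Set Circle)) : Set (Set Circle) :=
  (fun I => (⇑g) '' I) '' P

/-- `v_G(P)`, the union of the vertex sets of the `G`-orbit of the gap `P`. -/
def vOrb (G : Subgroup (Circle ≃ₜ Circle)) (P : Set (Set Circle)) : Set Circle :=
  ⋃ g ∈ G, vset (gapIm g P)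

/-- A loose lamination system: distinct non-leaf gaps have disjoint vertex sets. -/
def Loose (L : Set (Set Circle)) : Prop :=
  ∀ P Q, IsGap L P → IsGap L Q → ¬ IsLeafGap P → ¬ IsLeafGap Q → P ≠ Q →
    vset P ∩ vset Q = ∅

/-- A pseudo-fibered triple `(L₁, L₂, G)`. -/
structure PFib (L₁ L₂ : Set (Set Circle)) (G : Subgroup (Circle ≃ₜ Circle)) : Prop where
  orient : ∀ g ∈ G, OrientPres g
  fg : G.FG
  lam₁ : LamSys L₁
  lam₂ : LamSys L₂
  inv₁ : GInv G L₁
  inv₂ : GInv G L₂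
  veryFull₁ : VeryFull L₁
  veryFull₂ : VeryFull L₂
  loose₁ : Loose L₁
  loose₂ : Loose L₂
  disjEnds : ELset L₁ ∩ ELset L₂ = ∅

end

open Real

instance : Nontrivial Circle := ⟨⟨-1, 1, Circle.neg_ne_self 1⟩⟩

lemma sproj_exp (θ : ℝ) : sproj (Circle.exp θ) = sin θ / (cos θ - 1) := by
  simp [sproj, Circle.coe_exp, Complex.exp_ofReal_mul_I_re, Complex.exp_ofReal_mul_I_im]

lemma sin_div_cos_sub_one_eq {θ : ℝ} (h : sin (θ / 2) ≠ 0) :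
    sin θ / (cos θ - 1) = -(cos (θ / 2) / sin (θ / 2)) := by
  have hs := sin_two_mul (θ / 2)
  have hc := cos_two_mul (θ / 2)
  rw [mul_div_cancel₀ θ two_ne_zero] at hs hc
  rw [hs, hc, cos_sq', show 2 * (1 - sin (θ / 2) ^ 2) - 1 - 1 = -(2 * sin (θ / 2) ^ 2) by ring]
  field_simp

lemma strictMonoOn_sin_div_cos_sub_one :
    StrictMonoOn (fun θ => sin θ / (cos θ - 1)) (Ioo 0 (2 * π)) := by
  rintro a ⟨ha0, ha⟩ b ⟨hb0, hb⟩ hab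
  have hsa : 0 < sin (a / 2) := sin_pos_of_pos_of_lt_pi (by linarith) (by linarith)
  have hsb : 0 < sin (b / 2) := sin_pos_of_pos_of_lt_pi (by linarith) (by linarith)
  have hba : 0 < sin (b / 2 - a / 2) := sin_pos_of_pos_of_lt_pi (by linarith) (by linarith)
  simp only [sin_div_cos_sub_one_eq hsa.ne', sin_div_cos_sub_one_eq hsb.ne', neg_lt_neg_iff]
  rw [div_lt_div_iff₀ hsb hsa]
  rw [sin_sub] at hba
  linarith

section Arcs

variable (u : Circle)

lemma mul_exp_injOn : InjOn (u * Circle.exp ·) (Ioc 0 (2 * π)) :=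
  fun _ hs _ ht h => Circle.exp_injOn_Ioc (by simp) hs ht (mul_left_cancel h)

lemma ne_mul_exp {s : ℝ} (hs : s ∈ Ioo 0 (2 * π)) : u ≠ u * Circle.exp s := fun h =>
  hs.2.ne' (mul_exp_injOn u ⟨two_pi_pos, le_rfl⟩ (Ioo_subset_Ioc_self hs) (by simpa using h))

lemma exists_mul_exp_eq {p : Circle} (h : u ≠ p) :
    ∃ s ∈ Ioo 0 (2 * π), u * Circle.exp s = p :=
  ⟨Circle.angleDiff u p, ⟨Circle.angleDiff_pos h, Circle.angleDiff_lt_two_pi u p⟩,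
    by rw [mul_comm, Circle.exp_angleDiff_mul]⟩

lemma posOri_mul_exp_iff {s t : ℝ} (hs : s ∈ Ioo 0 (2 * π)) (ht : t ∈ Ioo 0 (2 * π)) :
    posOri u (u * Circle.exp s) (u * Circle.exp t) ↔ s < t := by
  simp only [posOri, inv_mul_cancel_left, sproj_exp,
    strictMonoOn_sin_div_cos_sub_one.lt_iff_lt hs ht]
  refine ⟨fun h => h.2.2.2, fun h => ⟨ne_mul_exp u hs, fun h' => h.ne ?_,
    (ne_mul_exp u ht).symm, h⟩⟩
  exact mul_exp_injOn u (Ioo_subset_Ioc_self hs) (Ioo_subset_Ioc_self ht) h'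

lemma oInt_mul_exp {t : ℝ} (ht : t ∈ Ioo 0 (2 * π)) :
    oInt u (u * Circle.exp t) = (u * Circle.exp ·) '' Ioo 0 t := by
  ext p
  constructor
  · intro hp
    obtain ⟨s, hs, rfl⟩ := exists_mul_exp_eq u hp.1
    exact ⟨s, ⟨hs.1, (posOri_mul_exp_iff u hs ht).1 hp⟩, rfl⟩
  · rintro ⟨s, hs, rfl⟩
    exact (posOri_mul_exp_iff u ⟨hs.1, hs.2.trans ht.2⟩ ht).2 hs.2

lemma oInt_mul_exp_left {t : ℝ} (ht : t ∈ Ioo 0 (2 * π)) :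
    oInt (u * Circle.exp t) u = (u * Circle.exp ·) '' Ioo t (2 * π) := by
  have ht' : 2 * π - t ∈ Ioo 0 (2 * π) := ⟨by linarith [ht.2], by linarith [ht.1]⟩
  have hu : u * Circle.exp t * Circle.exp (2 * π - t) = u := by
    rw [mul_assoc, ← Circle.exp_add, add_sub_cancel, Circle.exp_two_pi, mul_one]
  calc oInt (u * Circle.exp t) u
      = oInt (u * Circle.exp t) (u * Circle.exp t * Circle.exp (2 * π - t)) := by rw [hu]
    _ = (u * Circle.exp ·) '' ((· + t) '' Ioo 0 (2 * π - t)) := by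
        rw [oInt_mul_exp _ ht', image_image]
        simp only [mul_assoc, ← Circle.exp_add, add_comm t]
    _ = (u * Circle.exp ·) '' Ioo t (2 * π) := by simp

lemma compl_image_mul_exp_Ioo {t : ℝ} (ht : t ∈ Ioo 0 (2 * π)) :
    ((u * Circle.exp ·) '' Ioo 0 t)ᶜ = (u * Circle.exp ·) '' Icc t (2 * π) := by
  ext p
  constructor
  · intro hp
    rcases eq_or_ne u p with rfl | hup
    · exact ⟨2 * π, ⟨ht.2.le, le_rfl⟩, by simp⟩
    obtain ⟨s, hs, rfl⟩ := exists_mul_exp_eq u hup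
    exact ⟨s, ⟨not_lt.1 fun hst => hp ⟨s, ⟨hs.1, hst⟩, rfl⟩, hs.2.le⟩, rfl⟩
  · rintro ⟨r, hr, rfl⟩ ⟨s, hs, hsr⟩
    have := mul_exp_injOn u ⟨hs.1, (hs.2.trans ht.2).le⟩ ⟨ht.1.trans_le hr.1, hr.2⟩ hsr
    linarith [hs.2, hr.1]

lemma closure_image_mul_exp_Ioo {a b : ℝ} (hab : a < b) :
    closure ((u * Circle.exp ·) '' Ioo a b) = (u * Circle.exp ·) '' Icc a b := by
  have hc : Continuous (u * Circle.exp ·) := by fun_prop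
  refine (closure_minimal (image_mono Ioo_subset_Icc_self)
    (isCompact_Icc.image hc).isClosed).antisymm ?_
  simpa [closure_Ioo hab.ne] using image_closure_subset_closure_image hc (s := Ioo a b)

end Arcs

section OpenIntervals

variable {u v : Circle}

lemma compl_oInt (huv : u ≠ v) : (oInt u v)ᶜ = closure (oInt v u) := by
  obtain ⟨t, ht, rfl⟩ := exists_mul_exp_eq u huv
  rw [oInt_mul_exp u ht, oInt_mul_exp_left u ht, compl_image_mul_exp_Ioo u ht,
    closure_image_mul_exp_Ioo u ht.2]

lemma closure_oInt (huv : u ≠ v) : closure (oInt u v) = (oInt v u)ᶜ := by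
  rw [compl_oInt huv.symm]

lemma isOpen_oInt (huv : u ≠ v) : IsOpen (oInt u v) := by
  rw [← compl_compl (oInt u v), compl_oInt huv]
  exact isClosed_closure.isOpen_compl

lemma dual_oInt (huv : u ≠ v) : dual (oInt u v) = oInt v u := by
  rw [dual, interior_compl, closure_oInt huv, compl_compl]

lemma oInt_nonempty (huv : u ≠ v) : (oInt u v).Nonempty := by
  obtain ⟨t, ht, rfl⟩ := exists_mul_exp_eq u huv
  rw [oInt_mul_exp u ht]
  exact ⟨_, ⟨t / 2, ⟨by linarith [ht.1], by linarith [ht.1]⟩, rfl⟩⟩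

lemma isPreconnected_oInt (huv : u ≠ v) : IsPreconnected (oInt u v) := by
  obtain ⟨t, ht, rfl⟩ := exists_mul_exp_eq u huv
  rw [oInt_mul_exp u ht]
  exact isPreconnected_Ioo.image _ (by fun_prop)

lemma left_mem_closure_oInt (huv : u ≠ v) : u ∈ closure (oInt u v) := by
  rw [closure_oInt huv]
  exact fun h => h.2.1 rfl

lemma right_mem_closure_oInt (huv : u ≠ v) : v ∈ closure (oInt u v) := by
  rw [closure_oInt huv]
  exact fun h => h.1 rfl

end OpenIntervals

namespace IsND

variable {I : Set Circle}

lemma isOpen (hI : IsND I) : IsOpen I := by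
  obtain ⟨u, v, huv, rfl⟩ := hI
  exact isOpen_oInt huv

lemma nonempty (hI : IsND I) : I.Nonempty := by
  obtain ⟨u, v, huv, rfl⟩ := hI
  exact oInt_nonempty huv

lemma dual (hI : IsND I) : IsND (dual I) := by
  obtain ⟨u, v, huv, rfl⟩ := hI
  exact ⟨v, u, huv.symm, dual_oInt huv⟩

lemma closure_dual (hI : IsND I) : closure (_root_.dual I) = Iᶜ := by
  obtain ⟨u, v, huv, rfl⟩ := hI
  rw [dual_oInt huv, compl_oInt huv]

end IsND

lemma Homeomorph.image_dual (g : Circle ≃ₜ Circle) (s : Set Circle) :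
    ⇑g '' dual s = dual (⇑g '' s) := by
  rw [dual, dual, g.image_interior, image_compl_eq g.bijective]

lemma vset_gapIm (g : Circle ≃ₜ Circle) (P : Set (Set Circle)) :
    vset (gapIm g P) = ⇑g '' vset P := by
  rw [vset, vset, gapIm, ← image_sUnion, image_compl_eq g.bijective]

namespace IsGap

variable {L P : Set (Set Circle)}

lemma isND (hL : LamSys L) (hP : IsGap L P) {K : Set Circle} (hK : K ∈ P) : IsND K :=
  hL.nd K (hP.1 hK)

lemma eq_of_mem_closure (hL : LamSys L) (hP : IsGap L P) {I J : Set Circle} (hI : I ∈ P)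
    (hJ : J ∈ P) {y : Circle} (hyI : y ∈ I) (hyJ : y ∈ closure J) : J = I := by
  by_contra hne
  obtain ⟨z, hzI, hzJ⟩ := mem_closure_iff.1 hyJ I (hP.isND hL hI).isOpen hyI
  exact (hP.2.1 I hI J hJ (Ne.symm hne)).subset ⟨hzI, hzJ⟩

lemma mem_vset_of_mem_closure (hL : LamSys L) (hP : IsGap L P) {K : Set Circle} (hK : K ∈ P)
    {x : Circle} (hx : x ∈ closure K) (hxK : x ∉ K) : x ∈ vset P := by
  rintro ⟨M, hM, hxM⟩
  exact hxK (hP.eq_of_mem_closure hL hM hK hxM hx ▸ hxM)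

lemma finite (hL : LamSys L) (hP : IsGap L P) (hfin : (vset P).Finite) : P.Finite := by
  refine ((hfin.prod hfin).image fun q => oInt q.1 q.2).subset fun K hK => ?_
  obtain ⟨u, v, huv, rfl⟩ := hP.isND hL hK
  refine ⟨(u, v), ⟨?_, ?_⟩, rfl⟩
  · exact hP.mem_vset_of_mem_closure hL hK (left_mem_closure_oInt huv) fun h => h.1 rfl
  · exact hP.mem_vset_of_mem_closure hL hK (right_mem_closure_oInt huv) fun h => h.2.1 rfl

lemma exists_mem_closure (hL : LamSys L) (hP : IsGap L P) (hfin : (vset P).Finite)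
    (x : Circle) : ∃ K ∈ P, x ∈ closure K := by
  have hdense : Dense (⋃₀ P) := by simpa [vset] using dense_univ.sdiff_finite hfin
  simpa [(hP.finite hL hfin).closure_sUnion] using hdense x

lemma exists_mem_subset_dual (hL : LamSys L) (hP : IsGap L P) (hfin : (vset P).Finite)
    {K : Set Circle} (hK : K ∈ P) : ∃ M ∈ P, M ⊆ dual K := by
  by_cases h : ∃ M ∈ P, M ≠ K
  · obtain ⟨M, hM, hMK⟩ := h
    refine ⟨M, hM, interior_maximal (fun z hzM hzK => ?_) (hP.isND hL hM).isOpen⟩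
    exact (hP.2.1 M hM K hK hMK).subset ⟨hzM, hzK⟩
  · push Not at h
    -- `K` is the only member of `P`, so the whole open interval `dual K` consists of vertices
    have hKd := (hP.isND hL hK).dual
    obtain ⟨z, hz⟩ := hKd.nonempty
    refine absurd (hfin.subset fun w hw ⟨M, hM, hwM⟩ => ?_)
      (infinite_of_mem_nhds z (hKd.isOpen.mem_nhds hz))
    exact interior_subset hw (h M hM ▸ hwM)

end IsGap

theorem IsCompact.exists_fixedPoint_of_injOn {X : Type*} [TopologicalSpace X] {A : Set X}
    (hA : IsCompact A) (hAc : IsPreconnected A) (hAne : A.Nonempty) {φ : X → ℝ}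
    (hφ : ContinuousOn φ A) (hφA : InjOn φ A) {f : X → X} (hf : ContinuousOn f A)
    (hfA : MapsTo f A A) : ∃ x ∈ A, f x = x := by
  by_contra! hfix
  -- the displacement `φ ∘ f - φ` has constant sign on `A`, which fails at an extremum of `φ`
  have hd : ContinuousOn (fun x => φ (f x) - φ x) A := (hφ.comp hf hfA).sub hφ
  have hsign : (fun x => φ (f x) - φ x) '' A ⊆ Iio 0 ∪ Ioi 0 := by
    rintro _ ⟨x, hx, rfl⟩
    exact (sub_ne_zero.2 fun h => hfix x hx (hφA (hfA hx) hx h)).lt_or_gt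
  rcases (hAc.image _ hd).subset_or_subset isOpen_Iio isOpen_Ioi
    (disjoint_left.2 fun _ h h' => lt_asymm h h') hsign with hneg | hpos
  · obtain ⟨x, hx, hmin⟩ := hA.exists_isMinOn hAne hφ
    have h₁ : φ x ≤ φ (f x) := hmin (hfA hx)
    have h₂ : φ (f x) - φ x < 0 := hneg (mem_image_of_mem _ hx)
    linarith
  · obtain ⟨x, hx, hmax⟩ := hA.exists_isMaxOn hAne hφ
    have h₁ : φ (f x) ≤ φ x := hmax (hfA hx)
    have h₂ : 0 < φ (f x) - φ x := hpos (mem_image_of_mem _ hx)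
    linarith

lemma Circle.exists_fixedPoint_of_mapsTo {f : Circle → Circle} (hf : Continuous f)
    {A : Set Circle} (hA : IsClosed A) (hAc : IsPreconnected A) (hAne : A.Nonempty)
    {c : Circle} (hc : c ∉ A) (hfA : MapsTo f A A) : ∃ x ∈ A, f x = x := by
  -- `z ↦ arg (-(z / c))` is a continuous injection of `S¹ \ {c}` into `ℝ`
  refine hA.isCompact.exists_fixedPoint_of_injOn hAc hAne
    (φ := fun z => Complex.arg ((-(z / c) : Circle) : ℂ)) (fun z hz => ?_)
    (fun z _ w _ h => by simpa using Circle.injective_arg h) hf.continuousOn hfA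
  have hslit : ((-(z / c) : Circle) : ℂ) ∈ Complex.slitPlane := by
    refine singleton_subset_iff.1 <| (Complex.subset_slitPlane_iff_of_subset_sphere (r := 1)
      (by simp [Circle.norm_coe])).2 fun h => hc ?_
    have hzc : z / c = 1 := Circle.coe_eq_one.1 (by simpa [eq_comm] using h)
    exact div_eq_one.1 hzc ▸ hz
  have hcont : Continuous fun w : Circle => ((-(w / c) : Circle) : ℂ) := by fun_prop
  exact (ContinuousAt.comp (f := fun w : Circle => ((-(w / c) : Circle) : ℂ))
    (Complex.continuousAt_arg hslit) hcont.continuousAt).continuousWithinAt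

lemma IsND.exists_fixedPoint_of_image_subset {I : Set Circle} (hI : IsND I)
    (g : Circle ≃ₜ Circle) (hgI : ⇑g '' I ⊆ I) : ∃ x, g x = x := by
  obtain ⟨u, v, huv, rfl⟩ := hI
  obtain ⟨c, hc⟩ := oInt_nonempty huv.symm
  obtain ⟨x, -, hx⟩ := Circle.exists_fixedPoint_of_mapsTo g.continuous isClosed_closure
    (isPreconnected_oInt huv).closure ((oInt_nonempty huv).mono subset_closure)
    (by rw [closure_oInt huv]; exact not_not_intro hc)
    (mapsTo_iff_image_subset.2 ((g.image_closure _).trans_subset (closure_mono hgI)))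
  exact ⟨x, hx⟩

theorem Set.Finite.exists_rel_self {α : Type*} {r : α → α → Prop} [IsTrans α r]
    {s : Set α} (hs : s.Finite) (hne : s.Nonempty) (h : ∀ a ∈ s, ∃ b ∈ s, r a b) :
    ∃ a ∈ s, r a a := by
  choose! f hfs hf using h
  obtain ⟨a, ha⟩ := hne
  have hmem : ∀ n, f^[n] a ∈ s := fun n => (MapsTo.iterate hfs n) ha
  obtain ⟨m, n, hmn, heq⟩ := hs.exists_lt_map_eq_of_forall_mem hmem
  have hrel := Nat.rel_of_forall_rel_succ_of_lt r (f := fun n => f^[n] a)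
    (fun n => by simpa only [Function.iterate_succ_apply'] using hf _ (hmem n)) hmn
  exact ⟨f^[m] a, hmem m, heq ▸ hrel⟩

lemma isTrans_image_ssubset (G : Subgroup (Circle ≃ₜ Circle)) :
    IsTrans (Set Circle) fun I J => ∃ g ∈ G, ⇑g '' J ⊂ I := by
  refine ⟨fun I J K ⟨g, hg, hgJ⟩ ⟨h, hh, hhK⟩ => ?_⟩
  exact ⟨g * h, G.mul_mem hg hh, (image_comp g h K).trans_ssubset
    ((image_mono hhK.subset).trans_ssubset hgJ)⟩

lemma IsGap.exists_image_ssubset {G : Subgroup (Circle ≃ₜ Circle)} {L P : Set (Set Circle)}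
    (hL : LamSys L) (hinv : GInv G L) (hP : IsGap L P) (hfin : (vset P).Finite)
    (hdense : Dense (vOrb G P)) {I : Set Circle} (hI : I ∈ P) :
    ∃ K ∈ P, ∃ g ∈ G, ⇑g '' K ⊂ I := by
  obtain ⟨_, hyI, hy⟩ :=
    hdense.inter_open_nonempty I (hP.isND hL hI).isOpen (hP.isND hL hI).nonempty
  simp only [vOrb, mem_iUnion, vset_gapIm] at hy
  obtain ⟨g, hg, x, hx, rfl⟩ := hy
  obtain ⟨K₀, hK₀, hxK₀⟩ := hP.exists_mem_closure hL hfin x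
  obtain ⟨J, hJ, hlies⟩ := hP.2.2 _ (hinv g hg K₀ (hP.1 hK₀))
  -- `g '' W` lies in a member `J` of `P` whose closure contains `g x ∈ I`, forcing `J = I`
  obtain ⟨W, hxW, hgW, K, hK, hKW⟩ :
      ∃ W, x ∈ closure W ∧ ⇑g '' W ⊆ J ∧ ∃ K ∈ P, K ⊆ W := by
    rcases hlies with h | h
    · exact ⟨K₀, hxK₀, h, K₀, hK₀, subset_rfl⟩
    · obtain ⟨M, hM, hMK₀⟩ := hP.exists_mem_subset_dual hL hfin hK₀
      refine ⟨dual K₀, ?_, by rwa [g.image_dual], M, hM, hMK₀⟩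
      rw [(hP.isND hL hK₀).closure_dual]
      exact fun h => hx (mem_sUnion_of_mem h hK₀)
  have hJI : J = I := hP.eq_of_mem_closure hL hI hJ hyI
    (closure_mono hgW (g.image_closure W ▸ mem_image_of_mem g hxW))
  refine ⟨K, hK, g, hg, ⟨(image_mono hKW).trans (hJI ▸ hgW), fun h => hx ?_⟩⟩
  obtain ⟨x', hx'K, hx'⟩ := h hyI
  exact mem_sUnion_of_mem (g.injective hx' ▸ hx'K) hK

theorem stmt16_general (G : Subgroup (Circle ≃ₜ Circle))
    (L : Set (Set Circle)) (hL : LamSys L) (hinv : GInv G L)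
    (P : Set (Set Circle)) (hP : IsGap L P) (hfin : (vset P).Finite)
    (hdense : Dense (vOrb G P)) :
    ∃ g ∈ G, g ≠ 1 ∧ ∃ x : Circle, g x = x := by
  have hPne : P.Nonempty := by
    obtain ⟨I, hI⟩ := hL.nonempty
    obtain ⟨J, hJ, -⟩ := hP.2.2 I hI
    exact ⟨J, hJ⟩
  have := isTrans_image_ssubset G
  obtain ⟨A, hA, g, hg, hgA⟩ := (hP.finite hL hfin).exists_rel_self hPne
    fun I hI => hP.exists_image_ssubset hL hinv hfin hdense hI
  refine ⟨g, hg, ?_, (hP.isND hL hA).exists_fixedPoint_of_image_subset g hgA.subset⟩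
  rintro rfl
  exact hgA.ne (image_id A)

/-- If a `G`-invariant lamination system has a non-leaf ideal polygon `P` with `v_G(P)`
dense in `S¹`, then `G` has a nontrivial element with a fixed point. -/
theorem stmt16 (G : Subgroup (Circle ≃ₜ Circle)) (hor : ∀ g ∈ G, OrientPres g)
    (L : Set (Set Circle)) (hL : LamSys L) (hinv : GInv G L)
    (P : Set (Set Circle)) (hP : IsGap L P) (hfin : (vset P).Finite) (hnl : ¬ IsLeafGap P)
    (hdense : Dense (vOrb G P)) :
    ∃ g ∈ G, g ≠ 1 ∧ ∃ x : Circle, g x = x :=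
  stmt16_general G L hL hinv P hP hfin hdense
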